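/- Let U ⊆ B(H₁,H₂) be a subspace and φ = Map(U) as above. Then Ref(U) = { T ∈ B(H₁,H₂) : φ(P)⊥ T P = 0 for every projection P on H₁ }. -/

import Mathlib

open ContinuousLinearMap

/-- An orthogonal projection: a self-adjoint idempotent. -/
def IsProjection {K : Type*} [NormedAddCommGroup K] [InnerProductSpace ℂ K] [CompleteSpace K]
    (P : K →L[ℂ] K) : Prop :=
  IsSelfAdjoint P ∧ P ∘L P = P

/-- The closed subspace generated by `{ T (P y) : T ∈ U, y ∈ H₁ }`. -/
def mapSubmodule {H₁ H₂ : Type*} [NormedAddCommGroup H₁] [InnerProductSpace ℂ H₁]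
    [NormedAddCommGroup H₂] [InnerProductSpace ℂ H₂]
    (U : Set (H₁ →L[ℂ] H₂)) (P : H₁ →L[ℂ] H₁) : Submodule ℂ H₂ :=
  (Submodule.span ℂ {z : H₂ | ∃ T ∈ U, ∃ y : H₁, z = T (P y)}).topologicalClosure

/-- `φ(P) = Map(U)(P)`: the orthogonal projection of `H₂` onto `mapSubmodule U P`. -/
noncomputable def mapProj {H₁ H₂ : Type*} [NormedAddCommGroup H₁] [InnerProductSpace ℂ H₁]
    [NormedAddCommGroup H₂] [InnerProductSpace ℂ H₂] [CompleteSpace H₂]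
    (U : Set (H₁ →L[ℂ] H₂)) (P : H₁ →L[ℂ] H₁) : H₂ →L[ℂ] H₂ :=
  haveI : CompleteSpace (mapSubmodule U P) :=
    (Submodule.isClosed_topologicalClosure _).completeSpace_coe
  (mapSubmodule U P).subtypeL ∘L (mapSubmodule U P).orthogonalProjectionOnto

/-- The reflexive hull of a set of operators. -/
def RefHull {H₁ H₂ : Type*} [NormedAddCommGroup H₁] [InnerProductSpace ℂ H₁]
    [NormedAddCommGroup H₂] [InnerProductSpace ℂ H₂]
    (U : Set (H₁ →L[ℂ] H₂)) : Set (H₁ →L[ℂ] H₂) :=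
  {T | ∀ x : H₁, T x ∈ (Submodule.span ℂ ((fun A : H₁ →L[ℂ] H₂ => A x) '' U)).topologicalClosure}

/-! Write `[S]` for the closed span of `S ⊆ H₂`. Then `T ∈ Ref(U)` says `T x ∈ [U x]` for all `x`,
while `φ(P)⊥ T P = 0` says `T (P x) ∈ [U P H₁]` for all `x`. Since `[U (P x)] ⊆ [U P H₁]`, the
first implies the second; conversely, the rank-one projection `P` onto `ℂ ∙ x` has
`[U P H₁] = [U x]`. -/

theorem IsStarProjection.isProjection {K : Type*} [NormedAddCommGroup K] [InnerProductSpace ℂ K]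
    [CompleteSpace K] {P : K →L[ℂ] K} (hP : IsStarProjection P) : IsProjection P :=
  ⟨hP.isSelfAdjoint, hP.isIdempotentElem⟩

section MapSubmodule

variable {H₁ H₂ : Type*} [NormedAddCommGroup H₁] [InnerProductSpace ℂ H₁]
  [NormedAddCommGroup H₂] [InnerProductSpace ℂ H₂]

instance mapSubmodule.completeSpace [CompleteSpace H₂] (U : Set (H₁ →L[ℂ] H₂))
    (P : H₁ →L[ℂ] H₁) : CompleteSpace (mapSubmodule U P) :=
  Submodule.topologicalClosure.completeSpace _

theorem mapProj_eq_starProjection [CompleteSpace H₂] (U : Set (H₁ →L[ℂ] H₂)) (P : H₁ →L[ℂ] H₁) :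
    mapProj U P = (mapSubmodule U P).starProjection :=
  rfl

theorem one_sub_mapProj_comp_eq_zero_iff [CompleteSpace H₂] {U : Set (H₁ →L[ℂ] H₂)}
    {P : H₁ →L[ℂ] H₁} {T : H₁ →L[ℂ] H₂} :
    (1 - mapProj U P) ∘L T ∘L P = 0 ↔ ∀ x, T (P x) ∈ mapSubmodule U P := by
  refine ContinuousLinearMap.ext_iff.trans <| forall_congr' fun x => ?_
  simp only [comp_apply, sub_apply, one_apply_eq_self, zero_apply, sub_eq_zero]
  exact eq_comm.trans Submodule.starProjection_eq_self_iff

theorem closure_span_apply_le_mapSubmodule (U : Set (H₁ →L[ℂ] H₂)) (P : H₁ →L[ℂ] H₁) (x : H₁) :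
    (Submodule.span ℂ ((fun A : H₁ →L[ℂ] H₂ => A (P x)) '' U)).topologicalClosure ≤
      mapSubmodule U P :=
  Submodule.topologicalClosure_mono <| Submodule.span_mono <| by
    rintro _ ⟨A, hA, rfl⟩
    exact ⟨A, hA, x, rfl⟩

theorem mapSubmodule_starProjection_span_singleton (U : Set (H₁ →L[ℂ] H₂)) (x : H₁) :
    mapSubmodule U (ℂ ∙ x).starProjection =
      (Submodule.span ℂ ((fun A : H₁ →L[ℂ] H₂ => A x) '' U)).topologicalClosure := by
  refine le_antisymm (Submodule.topologicalClosure_mono ?_) ?_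
  · rw [Submodule.span_le]
    rintro _ ⟨A, hA, y, rfl⟩
    obtain ⟨c, hc⟩ := Submodule.mem_span_singleton.1 ((ℂ ∙ x).starProjection_apply_mem y)
    rw [← hc, map_smul]
    exact Submodule.smul_mem _ c (Submodule.subset_span ⟨A, hA, rfl⟩)
  · simpa [Submodule.starProjection_eq_self_iff.2 (Submodule.mem_span_singleton_self x)] using
      closure_span_apply_le_mapSubmodule U (ℂ ∙ x).starProjection x

end MapSubmodule

/-- Erdos: `Ref(U) = { T : φ(P)⊥ T P = 0 for every projection P on H₁ }`,
where `φ = Map(U)`. -/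
theorem refHull_eq_mapProj_intertwiners {H₁ H₂ : Type*}
    [NormedAddCommGroup H₁] [InnerProductSpace ℂ H₁] [CompleteSpace H₁]
    [NormedAddCommGroup H₂] [InnerProductSpace ℂ H₂] [CompleteSpace H₂]
    (U : Submodule ℂ (H₁ →L[ℂ] H₂)) :
    RefHull (U : Set (H₁ →L[ℂ] H₂)) =
      {T : H₁ →L[ℂ] H₂ | ∀ P : H₁ →L[ℂ] H₁, IsProjection P →
        (1 - mapProj (U : Set (H₁ →L[ℂ] H₂)) P) ∘L T ∘L P = 0} := by
  ext T
  simp only [Set.mem_ofPred_eq, one_sub_mapProj_comp_eq_zero_iff]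
  constructor
  · intro hT P _ x
    exact closure_span_apply_le_mapSubmodule _ P x (hT (P x))
  · intro hT x
    have hTx := hT (ℂ ∙ x).starProjection isStarProjection_starProjection.isProjection x
    rwa [Submodule.starProjection_eq_self_iff.2 (Submodule.mem_span_singleton_self x),
      mapSubmodule_starProjection_span_singleton] at hTx
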